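/- For every σ ≥ 1, the coupling map Φ_O is non-decreasing with respect to the order ⪯ on 𝒫^m_{ℓ+1}: for all o, o' ∈ 𝒫^m_{ℓ+1} and all r ∈ ℛ, if o ⪯ o' then Φ_O(o,r) ⪯ Φ_O(o',r). -/

import Mathlib

open Finset

noncomputable section

/-- The mutation map `ℳ_H`. -/
def calMH (ℓ κ : ℕ) (p : ℝ) (b : ℕ) (u : Fin ℓ → ℝ) : ℕ :=
  b - (Finset.univ.filter (fun k : Fin ℓ => (k : ℕ) < b ∧ u k < p / (κ : ℝ))).card
    + (Finset.univ.filter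
        (fun k : Fin ℓ => b ≤ (k : ℕ) ∧ 1 - p * (1 - 1 / (κ : ℝ)) < u k)).card

/-- The lumped fitness function `A_H`. -/
def AH (σ : ℝ) (b : ℕ) : ℝ := if b = 0 then σ else 1

/-- `o(k → l)`: move one chromosome from class `k` to class `l`. -/
def moveOcc (o : ℕ → ℕ) (k l : ℕ) : ℕ → ℕ :=
  Function.update (Function.update o k (o k - 1)) l
    (Function.update o k (o k - 1) l + 1)

/-- `o` is an occupancy distribution of `m` chromosomes in classes `0,…,ℓ`. -/
def isOcc (ℓ m : ℕ) (o : ℕ → ℕ) : Prop :=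
  (∀ h, ℓ < h → o h = 0) ∧ (∑ h ∈ Finset.range (ℓ + 1), o h) = m

/-- The partial order `⪯` on occupancy distributions. -/
def occLE (o o' : ℕ → ℕ) : Prop :=
  ∀ l, (∑ h ∈ Finset.range (l + 1), o h) ≤ ∑ h ∈ Finset.range (l + 1), o' h

/-!
Selection: since `σ ≥ 1` only favours class `0` and `o ⪯ o'` puts more mass into low classes,
the normalized cumulative fitness of `o'` dominates that of `o` at every level, whence
`𝒮_O(o', s) ≤ 𝒮_O(o, s)`. Mutation: `ℳ_H` is monotone in `b` because its two thresholds satisfy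
`p/κ ≤ 1 - p(1 - 1/κ)`. Removal: if the `j`-th chromosome lies in class `k` of `o` and `k'` of `o'`,
then on the levels `k' ≤ t < k` the partial sums of `o'` strictly exceed those of `o`, which absorbs
the unit that only `o'` has lost up to level `t`.
-/

theorem monotone_sub_card_filter_add_card_filter {ℓ : ℕ} (u : Fin ℓ → ℝ) {α β : ℝ}
    (hαβ : α ≤ β) :
    Monotone fun b : ℕ =>
      b - #{k : Fin ℓ | (k : ℕ) < b ∧ u k < α} + #{k : Fin ℓ | b ≤ (k : ℕ) ∧ β < u k} := by
  refine monotone_nat_of_le_succ fun b => ?_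
  have hlow (b : ℕ) : #{k : Fin ℓ | (k : ℕ) < b ∧ u k < α} ≤ b :=
    calc #{k : Fin ℓ | (k : ℕ) < b ∧ u k < α} ≤ #(range b) :=
          card_le_card_of_injOn (↑) (fun k hk => by simp_all) Fin.val_injective.injOn
      _ = b := card_range b
  have hdiag : #{k : Fin ℓ | (k : ℕ) = b} ≤ 1 :=
    card_le_one.2 fun x hx y hy => Fin.ext <| by simp_all
  -- coordinate `b` may enter the lower count or leave the upper one, never both, as `α ≤ β`
  have hstep : #{k : Fin ℓ | (k : ℕ) < b + 1 ∧ u k < α} + #{k : Fin ℓ | b ≤ (k : ℕ) ∧ β < u k}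
      ≤ #{k : Fin ℓ | (k : ℕ) < b ∧ u k < α} + #{k : Fin ℓ | b + 1 ≤ (k : ℕ) ∧ β < u k}
        + #{k : Fin ℓ | (k : ℕ) = b} := by
    rw [card_filter, card_filter, card_filter, card_filter, card_filter,
      ← sum_add_distrib, ← sum_add_distrib, ← sum_add_distrib]
    refine sum_le_sum fun k _ => ?_
    by_cases hα : u k < α <;> by_cases hβ : β < u k
    · linarith
    all_goals simp only [hα, hβ, and_true, and_false, if_false]; split_ifs <;> omega
  have := hlow b
  have := hlow (b + 1)
  omega

theorem calMH_monotone (ℓ κ : ℕ) {p : ℝ} (hp : p ≤ 1) (u : Fin ℓ → ℝ) :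
    Monotone fun b => calMH ℓ κ p b u :=
  monotone_sub_card_filter_add_card_filter (α := p / κ) (β := 1 - p * (1 - 1 / κ)) u <| by
    rw [show 1 - p * (1 - 1 / (κ : ℝ)) = p / κ + (1 - p) by ring]
    linarith

theorem moveOcc_add_ite (o : ℕ → ℕ) {k : ℕ} (hk : 1 ≤ o k) (l h : ℕ) :
    moveOcc o k l h + (if h = k then 1 else 0) = o h + (if h = l then 1 else 0) := by
  simp only [moveOcc, Function.update_apply]
  split_ifs <;> subst_vars <;> omega

theorem sum_moveOcc_add_ite (o : ℕ → ℕ) {k : ℕ} (hk : 1 ≤ o k) (l : ℕ) (s : Finset ℕ) :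
    ∑ h ∈ s, moveOcc o k l h + (if k ∈ s then 1 else 0)
      = ∑ h ∈ s, o h + (if l ∈ s then 1 else 0) := by
  rw [← sum_ite_eq' s k (fun _ => 1), ← sum_ite_eq' s l (fun _ => 1), ← sum_add_distrib,
    ← sum_add_distrib]
  exact sum_congr rfl fun h _ => moveOcc_add_ite o hk l h

theorem occLE_moveOcc {o o' : ℕ → ℕ} (hle : occLE o o') {k k' l l' : ℕ} (hk : 1 ≤ o k)
    (hk' : 1 ≤ o' k') (hl : l' ≤ l)
    (hgap : ∀ t, k' ≤ t → t < k → ∑ h ∈ range (t + 1), o h < ∑ h ∈ range (t + 1), o' h) :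
    occLE (moveOcc o k l) (moveOcc o' k' l') := by
  intro t
  have e := sum_moveOcc_add_ite o hk l (range (t + 1))
  have e' := sum_moveOcc_add_ite o' hk' l' (range (t + 1))
  have := hle t
  simp only [mem_range] at e e'
  by_cases ht : k' ≤ t ∧ t < k
  · have := hgap t ht.1 ht.2
    split_ifs at e e' <;> omega
  · split_ifs at e e' <;> omega

theorem sum_range_succ_lt_of_lt_of_le {o o' : ℕ → ℕ} {k k' j t : ℕ}
    (hk : ∑ h ∈ range k, o h < j) (hk' : j ≤ ∑ h ∈ range (k' + 1), o' h)
    (hk't : k' ≤ t) (htk : t < k) :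
    ∑ h ∈ range (t + 1), o h < ∑ h ∈ range (t + 1), o' h :=
  calc ∑ h ∈ range (t + 1), o h ≤ ∑ h ∈ range k, o h :=
        sum_le_sum_of_subset (range_subset_range.2 htk)
    _ < j := hk
    _ ≤ ∑ h ∈ range (k' + 1), o' h := hk'
    _ ≤ ∑ h ∈ range (t + 1), o' h := sum_le_sum_of_subset (range_subset_range.2 (by omega))

def fitnessSum (σ : ℝ) (o : ℕ → ℕ) (n : ℕ) : ℝ := ∑ h ∈ range n, (o h : ℝ) * AH σ h

theorem fitnessSum_mono {σ : ℝ} (hσ : 0 ≤ σ) (o : ℕ → ℕ) : Monotone (fitnessSum σ o) :=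
  fun _ _ hn => sum_le_sum_of_subset_of_nonneg (range_subset_range.2 hn) fun h _ _ =>
    mul_nonneg (Nat.cast_nonneg _) (by unfold AH; split_ifs <;> linarith)

theorem fitnessSum_succ (σ : ℝ) (o : ℕ → ℕ) (n : ℕ) :
    fitnessSum σ o (n + 1) = (σ - 1) * o 0 + ∑ h ∈ range (n + 1), (o h : ℝ) := by
  simp only [fitnessSum, sum_range_succ' _ n, AH, Nat.succ_ne_zero, if_false, if_true, mul_one]
  ring

theorem isOcc.sum_range_le {ℓ m : ℕ} {o : ℕ → ℕ} (ho : isOcc ℓ m o) (n : ℕ) :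
    ∑ h ∈ range n, o h ≤ m := by
  rw [← ho.2]
  calc ∑ h ∈ range n, o h ≤ ∑ h ∈ range (max n (ℓ + 1)), o h :=
        sum_le_sum_of_subset (range_subset_range.2 (le_max_left _ _))
    _ = ∑ h ∈ range (ℓ + 1), o h := by
        refine (sum_subset (range_subset_range.2 (le_max_right _ _)) fun h _ hh => ?_).symm
        exact ho.1 h (by simpa using hh)

theorem isOcc.fitnessSum_eq {ℓ m : ℕ} {o : ℕ → ℕ} (ho : isOcc ℓ m o) (σ : ℝ) :
    fitnessSum σ o (ℓ + 1) = (σ - 1) * o 0 + m := by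
  rw [fitnessSum_succ, ← ho.2, Nat.cast_sum]

theorem fitnessSum_mul_le_of_occLE {ℓ m : ℕ} {σ : ℝ} (hσ : 1 ≤ σ) {o o' : ℕ → ℕ}
    (ho : isOcc ℓ m o) (ho' : isOcc ℓ m o') (hle : occLE o o') (n : ℕ) :
    fitnessSum σ o n * fitnessSum σ o' (ℓ + 1) ≤ fitnessSum σ o' n * fitnessSum σ o (ℓ + 1) := by
  cases n with
  | zero => simp [fitnessSum]
  | succ n =>
    rw [ho.fitnessSum_eq, ho'.fitnessSum_eq, fitnessSum_succ, fitnessSum_succ]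
    have h0 : (σ - 1) * o 0 ≤ (σ - 1) * o' 0 :=
      mul_le_mul_of_nonneg_left (by exact_mod_cast hle 0) (by linarith)
    have hS : ∑ h ∈ range (n + 1), (o h : ℝ) ≤ ∑ h ∈ range (n + 1), (o' h : ℝ) := by
      exact_mod_cast hle n
    have hSm : ∑ h ∈ range (n + 1), (o h : ℝ) ≤ m := by exact_mod_cast ho.sum_range_le (n + 1)
    have ha : 0 ≤ (σ - 1) * o 0 := mul_nonneg (by linarith) (Nat.cast_nonneg _)
    -- with `a = (σ - 1) o(0)` and `S` the partial count:
    -- `(a' + S') (a + m) - (a + S) (a' + m) = (a' - a) (m - S) + (S' - S) (a + m)`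
    nlinarith [mul_nonneg (sub_nonneg.2 h0) (sub_nonneg.2 hSm),
      mul_nonneg (sub_nonneg.2 hS) (add_nonneg ha (Nat.cast_nonneg m))]

theorem le_of_lt_fitnessSum_of_fitnessSum_le {ℓ m : ℕ} (hm : 1 ≤ m) {σ : ℝ} (hσ : 1 ≤ σ)
    {o o' : ℕ → ℕ} (ho : isOcc ℓ m o) (ho' : isOcc ℓ m o') (hle : occLE o o') {s : ℝ} {n n' : ℕ}
    (hn : s * fitnessSum σ o (ℓ + 1) < fitnessSum σ o (n + 1))
    (hn' : fitnessSum σ o' n' ≤ s * fitnessSum σ o' (ℓ + 1)) :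
    n' ≤ n := by
  by_contra! hlt
  have hT : 0 ≤ fitnessSum σ o (ℓ + 1) := by
    rw [ho.fitnessSum_eq]
    exact add_nonneg (mul_nonneg (by linarith) (Nat.cast_nonneg _)) (Nat.cast_nonneg _)
  have hT' : 0 < fitnessSum σ o' (ℓ + 1) := by
    rw [ho'.fitnessSum_eq]
    exact add_pos_of_nonneg_of_pos (mul_nonneg (by linarith) (Nat.cast_nonneg _))
      (by exact_mod_cast hm)
  have hmono := fitnessSum_mono (σ := σ) (by linarith) o hlt
  have := calc s * fitnessSum σ o (ℓ + 1) * fitnessSum σ o' (ℓ + 1)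
      < fitnessSum σ o n' * fitnessSum σ o' (ℓ + 1) :=
        mul_lt_mul_of_pos_right (hn.trans_le hmono) hT'
    _ ≤ fitnessSum σ o' n' * fitnessSum σ o (ℓ + 1) :=
        fitnessSum_mul_le_of_occLE hσ ho ho' hle n'
    _ ≤ s * fitnessSum σ o' (ℓ + 1) * fitnessSum σ o (ℓ + 1) :=
        mul_le_mul_of_nonneg_right hn' hT
  linarith

theorem PhiO_monotone_general
    (ℓ m κ : ℕ) (hm : 1 ≤ m)
    (p : ℝ) (hp : 0 < p ∧ p < 1) (σ : ℝ) (hσ : 1 ≤ σ)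
    -- the selection map `𝒮_O`, characterized by
    -- `Σ_{h<𝒮_O(o,s)} o(h)A_H(h) ≤ s·Σ_h o(h)A_H(h) < Σ_{h≤𝒮_O(o,s)} o(h)A_H(h)`
    (SO : (ℕ → ℕ) → ℝ → ℕ)
    (hSO : ∀ (o : ℕ → ℕ) (s : ℝ), isOcc ℓ m o → 0 ≤ s → s < 1 →
      (∑ h ∈ Finset.range (SO o s), (o h : ℝ) * AH σ h)
          ≤ s * ∑ h ∈ Finset.range (ℓ + 1), (o h : ℝ) * AH σ h ∧
        s * (∑ h ∈ Finset.range (ℓ + 1), (o h : ℝ) * AH σ h)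
          < ∑ h ∈ Finset.range (SO o s + 1), (o h : ℝ) * AH σ h)
    -- the class `k` of the chromosome of index `j`, characterized by
    -- `Σ_{h<k} o(h) < j ≤ Σ_{h≤k} o(h)`
    (K : (ℕ → ℕ) → ℕ → ℕ)
    (hK : ∀ (o : ℕ → ℕ) (j : ℕ), isOcc ℓ m o → 1 ≤ j → j ≤ m →
      (∑ h ∈ Finset.range (K o j), o h) < j ∧
        j ≤ ∑ h ∈ Finset.range (K o j + 1), o h) :
    -- `Φ_O(o,(s,i,j,u)) = o(k → ℳ_H(𝒮_O(o,s),u))` is non-decreasing for `⪯`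
    ∀ o o' : ℕ → ℕ, isOcc ℓ m o → isOcc ℓ m o' → occLE o o' →
      ∀ s : ℝ, 0 ≤ s → s < 1 → ∀ _i j : ℕ, 1 ≤ j → j ≤ m →
      ∀ u : Fin ℓ → ℝ, (∀ k, 0 ≤ u k ∧ u k ≤ 1) →
      occLE (moveOcc o (K o j) (calMH ℓ κ p (SO o s) u))
        (moveOcc o' (K o' j) (calMH ℓ κ p (SO o' s) u)) := by
  intro o o' ho ho' hle s hs0 hs1 _ j hj1 hjm u _
  have hsel : SO o' s ≤ SO o s :=
    le_of_lt_fitnessSum_of_fitnessSum_le hm hσ ho ho' hle (hSO o s ho hs0 hs1).2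
      (hSO o' s ho' hs0 hs1).1
  obtain ⟨hk, hk1⟩ := hK o j ho hj1 hjm
  obtain ⟨hk', hk1'⟩ := hK o' j ho' hj1 hjm
  refine occLE_moveOcc hle ?_ ?_ (calMH_monotone ℓ κ hp.2.le u hsel)
    fun t => sum_range_succ_lt_of_lt_of_le hk hk1'
  · rw [sum_range_succ] at hk1
    omega
  · rw [sum_range_succ] at hk1'
    omega

theorem PhiO_monotone
    (ℓ m κ : ℕ) (hℓ : 1 ≤ ℓ) (hm : 1 ≤ m) (hκ : 2 ≤ κ)
    (p : ℝ) (hp : 0 < p ∧ p < 1) (σ : ℝ) (hσ : 1 ≤ σ)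
    -- the selection map `𝒮_O`, characterized by
    -- `Σ_{h<𝒮_O(o,s)} o(h)A_H(h) ≤ s·Σ_h o(h)A_H(h) < Σ_{h≤𝒮_O(o,s)} o(h)A_H(h)`
    (SO : (ℕ → ℕ) → ℝ → ℕ)
    (hSO : ∀ (o : ℕ → ℕ) (s : ℝ), isOcc ℓ m o → 0 ≤ s → s < 1 →
      (∑ h ∈ Finset.range (SO o s), (o h : ℝ) * AH σ h)
          ≤ s * ∑ h ∈ Finset.range (ℓ + 1), (o h : ℝ) * AH σ h ∧
        s * (∑ h ∈ Finset.range (ℓ + 1), (o h : ℝ) * AH σ h)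
          < ∑ h ∈ Finset.range (SO o s + 1), (o h : ℝ) * AH σ h)
    -- the class `k` of the chromosome of index `j`, characterized by
    -- `Σ_{h<k} o(h) < j ≤ Σ_{h≤k} o(h)`
    (K : (ℕ → ℕ) → ℕ → ℕ)
    (hK : ∀ (o : ℕ → ℕ) (j : ℕ), isOcc ℓ m o → 1 ≤ j → j ≤ m →
      (∑ h ∈ Finset.range (K o j), o h) < j ∧
        j ≤ ∑ h ∈ Finset.range (K o j + 1), o h) :
    -- `Φ_O(o,(s,i,j,u)) = o(k → ℳ_H(𝒮_O(o,s),u))` is non-decreasing for `⪯`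
    ∀ o o' : ℕ → ℕ, isOcc ℓ m o → isOcc ℓ m o' → occLE o o' →
      ∀ s : ℝ, 0 ≤ s → s < 1 → ∀ _i j : ℕ, 1 ≤ j → j ≤ m →
      ∀ u : Fin ℓ → ℝ, (∀ k, 0 ≤ u k ∧ u k ≤ 1) →
      occLE (moveOcc o (K o j) (calMH ℓ κ p (SO o s) u))
        (moveOcc o' (K o' j) (calMH ℓ κ p (SO o' s) u)) :=
  PhiO_monotone_general ℓ m κ hm p hp σ hσ SO hSO K hK

end
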